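/- For every integer n ≥ 2 and every x ∈ [−1,1], one has T_n(x) + 2 − ((x+2)/n²)·T_n′(x) ≥ 0. -/

import Mathlib

open Polynomial

noncomputable def chebT (n : ℕ) : Polynomial ℝ := Polynomial.Chebyshev.T ℝ (n : ℤ)

/-!
Put `x = cos θ` with `0 < θ < π`. Since `T_n(cos θ) = cos nθ` and
`T_n'(cos θ) sin θ = n sin nθ`, the inequality becomes `f(nθ) ≤ n f(θ)` for
`f t = sin t / (2 + cos t)`. On `[0, π]` the function `f` is concave (its derivative
`(1 + 2 cos t) / (2 + cos t)²` increases with `cos t`) and vanishes at both ends. Concavity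
at `0` settles the case `nθ ≤ π`; concavity at `π`, combined with `f(nπ - s) ≤ f(π - s)`,
settles `n(π - θ) ≤ π`. Otherwise Jordan's inequality gives `n sin θ ≥ 2`, hence
`n f(θ) ≥ 2/3 ≥ max f`. The endpoints `x = ±1` follow by continuity.
-/

open Real Set

theorem ConcaveOn.map_add_smul_le {E : Type*} [AddCommGroup E] [Module ℝ E] {s : Set E}
    {g : E → ℝ} (hg : ConcaveOn ℝ s g) {p v : E} {r : ℝ} (hp : p ∈ s)
    (hpv : p + r • v ∈ s) (hgp : g p = 0) (hr : 1 ≤ r) :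
    g (p + r • v) ≤ r * g (p + v) := by
  have hr0 : 0 < r := by linarith
  have hcomb : (1 - r⁻¹) • p + r⁻¹ • (p + r • v) = p + v := by
    rw [smul_add, smul_smul, inv_mul_cancel₀ hr0.ne', one_smul, sub_smul, one_smul]
    abel
  have h := hg.2 hp hpv (sub_nonneg.2 (inv_le_one_of_one_le₀ hr)) (inv_nonneg.2 hr0.le)
    (sub_add_cancel 1 r⁻¹)
  rw [hcomb, smul_eq_mul, smul_eq_mul, hgp, mul_zero, zero_add] at h
  exact (inv_mul_le_iff₀ hr0).1 h

noncomputable def sinDivTwoAddCos (t : ℝ) : ℝ := sin t / (2 + cos t)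

lemma two_add_cos_pos (t : ℝ) : 0 < 2 + cos t := by
  linarith [neg_one_le_cos t]

lemma sinDivTwoAddCos_le (t : ℝ) : sinDivTwoAddCos t ≤ 2 / 3 := by
  rw [sinDivTwoAddCos, div_le_iff₀ (two_add_cos_pos t)]
  nlinarith [sq_nonneg (sin t - 3 / 4), sq_nonneg (cos t + 1 / 2), sin_sq_add_cos_sq t]

lemma hasDerivAt_sinDivTwoAddCos (t : ℝ) :
    HasDerivAt sinDivTwoAddCos ((1 + 2 * cos t) / (2 + cos t) ^ 2) t := by
  refine ((hasDerivAt_sin t).div ((hasDerivAt_cos t).const_add 2)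
    (two_add_cos_pos t).ne').congr_deriv ?_
  congr 1
  linear_combination sin_sq_add_cos_sq t

lemma concaveOn_sinDivTwoAddCos : ConcaveOn ℝ (Icc 0 π) sinDivTwoAddCos := by
  have hdiff : Differentiable ℝ sinDivTwoAddCos := fun t =>
    (hasDerivAt_sinDivTwoAddCos t).differentiableAt
  refine AntitoneOn.concaveOn_of_deriv (convex_Icc 0 π) hdiff.continuous.continuousOn
    hdiff.differentiableOn ?_
  rw [interior_Icc]
  intro a ha b hb hab
  rw [(hasDerivAt_sinDivTwoAddCos a).deriv, (hasDerivAt_sinDivTwoAddCos b).deriv,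
    div_le_div_iff₀ (pow_pos (two_add_cos_pos b) 2) (pow_pos (two_add_cos_pos a) 2)]
  have hcos : cos b ≤ cos a := cos_le_cos_of_nonneg_of_le_pi ha.1.le hb.2.le hab
  -- the difference of the two sides is `(cos a - cos b) * (4 - cos a - cos b - 2 cos a cos b)`
  have hfactor : 0 ≤ 4 - cos a - cos b - 2 * cos a * cos b := by
    nlinarith [neg_one_le_cos a, cos_le_one a, neg_one_le_cos b, cos_le_one b]
  nlinarith [mul_nonneg (sub_nonneg.2 hcos) hfactor]

lemma sinDivTwoAddCos_nat_mul_pi_sub_le (n : ℕ) {s : ℝ} (hs : s ∈ Icc 0 π) :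
    sinDivTwoAddCos (n * π - s) ≤ sinDivTwoAddCos (π - s) := by
  have hsin : 0 ≤ sin s := sin_nonneg_of_nonneg_of_le_pi hs.1 hs.2
  rw [sinDivTwoAddCos, sinDivTwoAddCos, sin_nat_mul_pi_sub, cos_nat_mul_pi_sub, sin_pi_sub,
    cos_pi_sub]
  rcases n.even_or_odd with he | ho
  · rw [he.neg_one_pow, one_mul, one_mul, neg_div]
    have := div_nonneg hsin (two_add_cos_pos s).le
    have := div_nonneg hsin (by linarith [cos_le_one s] : (0 : ℝ) ≤ 2 + -cos s)
    linarith
  · rw [ho.neg_one_pow]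
    exact le_of_eq (by ring)

lemma two_le_mul_sin {r θ : ℝ} (hθ : θ ∈ Icc 0 π) (h₁ : π ≤ r * θ)
    (h₂ : π ≤ r * (π - θ)) : 2 ≤ r * sin θ := by
  have hr : 0 ≤ r := by nlinarith [pi_pos, hθ.1, hθ.2]
  suffices h : ∃ φ, 0 ≤ φ ∧ φ ≤ π / 2 ∧ π ≤ r * φ ∧ sin φ = sin θ by
    obtain ⟨φ, hφ0, hφ, hrφ, hsin⟩ := h
    calc (2 : ℝ) = 2 / π * π := by field_simp
      _ ≤ 2 / π * (r * φ) := by gcongr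
      _ = r * (2 / π * φ) := by ring
      _ ≤ r * sin θ := hsin ▸ mul_le_mul_of_nonneg_left (mul_le_sin hφ0 hφ) hr
  rcases le_total θ (π / 2) with hθ2 | hθ2
  · exact ⟨θ, hθ.1, hθ2, h₁, rfl⟩
  · exact ⟨π - θ, sub_nonneg.2 hθ.2, by linarith, h₂, sin_pi_sub θ⟩

lemma sinDivTwoAddCos_nat_mul_le (n : ℕ) {θ : ℝ} (hθ : θ ∈ Icc 0 π) :
    sinDivTwoAddCos (n * θ) ≤ n * sinDivTwoAddCos θ := by
  rcases Nat.eq_zero_or_pos n with rfl | hn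
  · simp [sinDivTwoAddCos]
  have hn1 : (1 : ℝ) ≤ n := Nat.one_le_cast.2 hn
  have hzero : sinDivTwoAddCos 0 = 0 := by simp [sinDivTwoAddCos]
  have hpi : sinDivTwoAddCos π = 0 := by simp [sinDivTwoAddCos]
  have h0 : (0 : ℝ) ∈ Icc 0 π := ⟨le_rfl, pi_pos.le⟩
  have hπ : π ∈ Icc 0 π := ⟨pi_pos.le, le_rfl⟩
  by_cases hnθ : n * θ ≤ π
  · simpa using concaveOn_sinDivTwoAddCos.map_add_smul_le (v := θ) h0
      (by simpa using ⟨mul_nonneg (Nat.cast_nonneg n) hθ.1, hnθ⟩) hzero hn1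
  by_cases hnε : n * (π - θ) ≤ π
  · have hnε0 : 0 ≤ n * (π - θ) := mul_nonneg (by positivity) (sub_nonneg.2 hθ.2)
    calc sinDivTwoAddCos (n * θ) = sinDivTwoAddCos (n * π - n * (π - θ)) := by ring_nf
      _ ≤ sinDivTwoAddCos (π - n * (π - θ)) :=
          sinDivTwoAddCos_nat_mul_pi_sub_le n ⟨hnε0, hnε⟩
      _ = sinDivTwoAddCos (π + (n : ℝ) • -(π - θ)) := by rw [smul_eq_mul]; ring_nf
      _ ≤ n * sinDivTwoAddCos (π + -(π - θ)) :=
          concaveOn_sinDivTwoAddCos.map_add_smul_le hπ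
            (by rw [smul_eq_mul]; constructor <;> linarith) hpi hn1
      _ = n * sinDivTwoAddCos θ := by ring_nf
  push Not at hnθ hnε
  have hsin := two_le_mul_sin hθ hnθ.le hnε.le
  calc sinDivTwoAddCos (n * θ) ≤ 2 / 3 := sinDivTwoAddCos_le _
    _ ≤ n * sinDivTwoAddCos θ := by
      rw [sinDivTwoAddCos, mul_div_assoc', le_div_iff₀ (two_add_cos_pos θ)]
      linarith [cos_le_one θ]

lemma eval_chebT_cos (n : ℕ) (θ : ℝ) : (chebT n).eval (cos θ) = cos (n * θ) := by
  simp [chebT]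

lemma eval_derivative_chebT_cos_mul_sin (n : ℕ) (θ : ℝ) :
    (derivative (chebT n)).eval (cos θ) * sin θ = n * sin (n * θ) := by
  rw [chebT, Chebyshev.T_derivative_eq_U, eval_mul, mul_assoc, Chebyshev.U_real_cos]
  simp

lemma neg_one_le_eval_chebT (n : ℕ) {x : ℝ} (hx : x ∈ Icc (-1 : ℝ) 1) :
    -1 ≤ (chebT n).eval x := by
  rw [← cos_arccos hx.1 hx.2, eval_chebT_cos]
  exact neg_one_le_cos _

lemma add_two_mul_eval_derivative_chebT_le (n : ℕ) {x : ℝ} (hx : x ∈ Icc (-1 : ℝ) 1) :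
    (x + 2) * (derivative (chebT n)).eval x ≤ n ^ 2 * ((chebT n).eval x + 2) := by
  refine le_on_closure (f := fun y => (y + 2) * (derivative (chebT n)).eval y)
    (g := fun y => (n : ℝ) ^ 2 * ((chebT n).eval y + 2)) (s := Ioo (-1) 1) (fun y hy => ?_)
    (by fun_prop) (by fun_prop) (by rwa [closure_Ioo (by norm_num : (-1 : ℝ) ≠ 1)])
  obtain ⟨θ, hθ0, hθπ, rfl⟩ : ∃ θ, 0 < θ ∧ θ < π ∧ cos θ = y :=
    ⟨arccos y, arccos_pos.2 hy.2, arccos_lt_pi.2 hy.1, cos_arccos hy.1.le hy.2.le⟩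
  have hsin : 0 < sin θ := sin_pos_of_pos_of_lt_pi hθ0 hθπ
  have hkey := sinDivTwoAddCos_nat_mul_le n ⟨hθ0.le, hθπ.le⟩
  rw [sinDivTwoAddCos, sinDivTwoAddCos, mul_div_assoc', div_le_div_iff₀ (two_add_cos_pos _)
    (two_add_cos_pos _)] at hkey
  rw [← mul_le_mul_iff_of_pos_right hsin, mul_assoc, eval_derivative_chebT_cos_mul_sin,
    eval_chebT_cos]
  nlinarith [mul_le_mul_of_nonneg_left hkey (Nat.cast_nonneg n)]

theorem robertson_chebyshev (n : ℕ) (x : ℝ) (hx : x ∈ Set.Icc (-1 : ℝ) 1) :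
    (chebT n).eval x + 2 - (x + 2) / (n : ℝ) ^ 2 * (derivative (chebT n)).eval x ≥ 0 := by
  have hT : 0 ≤ (chebT n).eval x + 2 := by linarith [neg_one_le_eval_chebT n hx]
  have h : (x + 2) * (derivative (chebT n)).eval x / (n : ℝ) ^ 2 ≤ (chebT n).eval x + 2 :=
    div_le_of_le_mul₀ (sq_nonneg _) hT (by linarith [add_two_mul_eval_derivative_chebT_le n hx])
  rw [div_mul_eq_mul_div]
  linarith
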